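/- Let b > 0 and let y = (y_1, y_2, y_3, y_4) ∈ ℕ⁴ with y_1 - y_3 = b, and set n = y_1 + y_2 + y_3 + y_4. With k(y) the number of lattice paths from the origin to y all of whose points except y satisfy x_1 - x_3 < b, and k_1*(y) the number of such paths starting from e_1 = (1,0,0,0), the identity b · (n-1) · k_1*(y) = (b-1) · y_1 · k(y) holds; equivalently, k_1*(y)/k(y) = ((b-1)/b) · y_1/(n-1). -/

import Mathlib

open scoped Classical

/-- Number of lattice paths from `a` to `x`, each step adding one standard
basis vector, all of whose points (including the endpoints) lie in `A`. -/
noncomputable def pathCount {k : ℕ} (A : Set (Fin k → ℕ)) (a : Fin k → ℕ)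
    (x : Fin k → ℕ) : ℕ :=
  if x = a then (if a ∈ A then 1 else 0)
  else if x ∈ A then
    ∑ i : Fin k, if h : 0 < x i then pathCount A a (Function.update x i (x i - 1)) else 0
  else 0
termination_by ∑ i, x i
decreasing_by
  have h1 := Finset.sum_update_of_mem (Finset.mem_univ i) x (x i - 1)
  have h2 := Finset.sum_eq_sum_sdiff_singleton_add (Finset.mem_univ i) x
  omega

/-- Number of lattice paths from `a` to `y` all of whose points except `y`
lie in `R`. -/
noncomputable def exitCount {k : ℕ} (R : Set (Fin k → ℕ)) (a y : Fin k → ℕ) : ℕ :=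
  pathCount (insert y R) a y

/-!
A path from `a ∈ R` can only enter the boundary point `y` (with `y₁ - y₃ = b`) by a final
`e₁`-step, so `k(y)` counts the paths from `a` to `y - e₁` that stay in `R`. By the reflection
principle in the hyperplane `x₁ - x₃ = b`, which swaps the steps `e₁` and `e₃`, the paths from `a`
to `y - e₁` that do touch the boundary are equinumerous with all paths from `a` to `y - e₃`. Free
path counts are multinomial coefficients, and `|x| · M(x - eᵢ) = xᵢ · M(x)` turns the two
differences into the closed forms `n · k(y) = b · M(y)` and `n (n - 1) · k₁*(y) = y₁ (b - 1) · M(y)`.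
For `b = 1` the start `e₁` lies outside `R`, and `k₁*(y) = 0` unless `y = e₁`.
-/

open Function Finset

lemma Finset.sum_update_pred {α : Type*} [DecidableEq α] {s : Finset α} {f : α → ℕ} {i : α}
    (hi : i ∈ s) (hf : 0 < f i) : ∑ j ∈ s, update f i (f i - 1) j = ∑ j ∈ s, f j - 1 := by
  have h1 := Finset.sum_update_of_mem hi f (f i - 1)
  have h2 := Finset.sum_eq_sum_sdiff_singleton_add hi f
  omega

namespace Nat

variable {α : Type*} [DecidableEq α] {s : Finset α} {f : α → ℕ} {i : α}

theorem sum_mul_multinomial_update_pred (hi : i ∈ s) :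
    (∑ j ∈ s, f j) * (if 0 < f i then multinomial s (update f i (f i - 1)) else 0) =
      f i * multinomial s f := by
  split_ifs with hf
  swap
  · rw [Nat.eq_zero_of_not_pos hf, mul_zero, zero_mul]
  set g := update f i (f i - 1) with hg
  have hsum : ∑ j ∈ s, f j = (∑ j ∈ s, g j) + 1 := by
    have := Finset.single_le_sum (fun j _ => Nat.zero_le (f j)) hi
    rw [hg, Finset.sum_update_pred hi hf]
    omega
  have hprod : ∏ j ∈ s, (f j)! = f i * ∏ j ∈ s, (g j)! := by
    have hrest : ∏ j ∈ s.erase i, (g j)! = ∏ j ∈ s.erase i, (f j)! :=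
      Finset.prod_congr rfl fun j hj => by rw [hg, update_of_ne (Finset.ne_of_mem_erase hj)]
    rw [← Finset.mul_prod_erase s _ hi, ← Finset.mul_prod_erase s _ hi, hrest, ← mul_assoc,
      hg, update_self, Nat.mul_factorial_pred hf.ne']
  apply Nat.eq_of_mul_eq_mul_left (Finset.prod_pos fun j _ => (g j).factorial_pos)
  calc (∏ j ∈ s, (g j)!) * ((∑ j ∈ s, f j) * multinomial s g)
      = (∑ j ∈ s, f j) * (∑ j ∈ s, g j)! := by rw [mul_left_comm, multinomial_spec]
    _ = (∏ j ∈ s, (f j)!) * multinomial s f := by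
      rw [multinomial_spec, hsum, Nat.factorial_succ]
    _ = (∏ j ∈ s, (g j)!) * (f i * multinomial s f) := by rw [hprod]; ring

theorem multinomial_eq_sum_update_pred (hf : ∑ j ∈ s, f j ≠ 0) :
    multinomial s f = ∑ i ∈ s, if 0 < f i then multinomial s (update f i (f i - 1)) else 0 := by
  apply Nat.eq_of_mul_eq_mul_left (Nat.pos_of_ne_zero hf)
  rw [Finset.mul_sum, Finset.sum_congr rfl fun i hi => sum_mul_multinomial_update_pred hi,
    Finset.sum_mul]

end Nat

section PathCount

variable {k : ℕ} {A : Set (Fin k → ℕ)} {a : Fin k → ℕ}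

lemma sum_update_pred_lt (x : Fin k → ℕ) {i : Fin k} (h : 0 < x i) :
    ∑ j, update x i (x i - 1) j < ∑ j, x j := by
  have := Finset.sum_update_pred (Finset.mem_univ i) h
  have := Finset.single_le_sum (fun j _ => Nat.zero_le (x j)) (Finset.mem_univ i)
  omega

lemma pathCount_self : pathCount A a a = if a ∈ A then 1 else 0 := by
  rw [pathCount, if_pos rfl]

lemma pathCount_of_notMem {x : Fin k → ℕ} (hx : x ∉ A) : pathCount A a x = 0 := by
  rw [pathCount]
  split_ifs with hxa
  · exact absurd (hxa ▸ ‹a ∈ A›) hx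
  · rfl
  · rfl

lemma pathCount_of_ne_of_mem {x : Fin k → ℕ} (hxa : x ≠ a) (hx : x ∈ A) :
    pathCount A a x =
      ∑ i, if 0 < x i then pathCount A a (update x i (x i - 1)) else 0 := by
  rw [pathCount, if_neg hxa, if_pos hx]
  rfl

theorem pathCount_of_not_le {x : Fin k → ℕ} (h : ¬a ≤ x) : pathCount A a x = 0 := by
  by_cases hx : x ∈ A
  · rw [pathCount_of_ne_of_mem (by rintro rfl; exact h le_rfl) hx]
    refine Finset.sum_eq_zero fun i _ => ?_
    split_ifs with hi
    · refine pathCount_of_not_le fun hle => h fun j => ?_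
      have := hle j
      rcases eq_or_ne j i with rfl | hji
      · exact (update_self j _ x ▸ this).trans (Nat.sub_le _ _)
      · rwa [update_of_ne hji] at this
    · rfl
  · exact pathCount_of_notMem hx
termination_by ∑ j, x j
decreasing_by exact sum_update_pred_lt x hi

theorem pathCount_of_start_notMem (ha : a ∉ A) (x : Fin k → ℕ) : pathCount A a x = 0 := by
  by_cases hxa : x = a
  · rw [hxa, pathCount_self, if_neg ha]
  by_cases hx : x ∈ A
  · rw [pathCount_of_ne_of_mem hxa hx]
    refine Finset.sum_eq_zero fun i _ => ?_
    split_ifs with hi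
    · exact pathCount_of_start_notMem ha _
    · rfl
  · exact pathCount_of_notMem hx
termination_by ∑ j, x j
decreasing_by exact sum_update_pred_lt x hi

theorem pathCount_insert_of_sum_lt {x y : Fin k → ℕ} (h : ∑ j, x j < ∑ j, y j) :
    pathCount (insert y A) a x = pathCount A a x := by
  have hmem : ∀ {w : Fin k → ℕ}, ∑ j, w j < ∑ j, y j → (w ∈ insert y A ↔ w ∈ A) :=
    fun hw => Set.mem_insert_iff.trans (or_iff_right (by rintro rfl; exact hw.false))
  by_cases hxa : x = a
  · simp only [hxa, pathCount_self, hmem (hxa ▸ h)]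
  by_cases hx : x ∈ A
  · rw [pathCount_of_ne_of_mem hxa hx, pathCount_of_ne_of_mem hxa ((hmem h).mpr hx)]
    refine Finset.sum_congr rfl fun i _ => ?_
    split_ifs with hi
    · exact pathCount_insert_of_sum_lt ((sum_update_pred_lt x hi).trans h)
    · rfl
  · rw [pathCount_of_notMem hx, pathCount_of_notMem (mt (hmem h).mp hx)]
termination_by ∑ j, x j
decreasing_by exact sum_update_pred_lt x hi

theorem exitCount_eq_sum {y : Fin k → ℕ} (hya : y ≠ a) :
    exitCount A a y = ∑ m, if 0 < y m then pathCount A a (update y m (y m - 1)) else 0 := by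
  rw [exitCount, pathCount_of_ne_of_mem hya (Set.mem_insert y A)]
  refine Finset.sum_congr rfl fun m _ => ?_
  split_ifs with hm
  · exact pathCount_insert_of_sum_lt (sum_update_pred_lt y hm)
  · rfl

lemma update_pred_sub {x : Fin k → ℕ} (i : Fin k) :
    update x i (x i - 1) - a = update (x - a) i (x i - a i - 1) := by
  ext j
  rcases eq_or_ne j i with rfl | hji
  · simp only [Pi.sub_apply, update_self]; omega
  · simp only [Pi.sub_apply, update_of_ne hji]

lemma le_update_pred_iff {x : Fin k → ℕ} (h : a ≤ x) {i : Fin k} (hi : 0 < x i) :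
    a ≤ update x i (x i - 1) ↔ a i < x i := by
  refine ⟨fun hle => ?_, fun hlt j => ?_⟩
  · have : a i ≤ x i - 1 := by simpa using hle i
    omega
  · rcases eq_or_ne j i with rfl | hji
    · rw [update_self]; exact Nat.le_sub_one_of_lt hlt
    · rw [update_of_ne hji]; exact h j

theorem pathCount_univ (a x : Fin k → ℕ) :
    pathCount Set.univ a x = if a ≤ x then Nat.multinomial univ (x - a) else 0 := by
  by_cases hax : a ≤ x
  swap
  · rw [pathCount_of_not_le hax, if_neg hax]
  rw [if_pos hax]
  by_cases hxa : x = a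
  · subst hxa
    simp [pathCount_self, Nat.multinomial]
  have hsum : ∑ j, (x - a) j ≠ 0 := fun h0 => hxa <| le_antisymm
    (tsub_eq_zero_iff_le.mp (funext fun j => Finset.sum_eq_zero_iff.mp h0 j (mem_univ j))) hax
  rw [pathCount_of_ne_of_mem hxa (Set.mem_univ x), Nat.multinomial_eq_sum_update_pred hsum]
  refine Finset.sum_congr rfl fun i _ => ?_
  have hai : a i ≤ x i := hax i
  by_cases hi : 0 < x i
  · rw [if_pos hi, pathCount_univ, le_update_pred_iff hax hi, update_pred_sub, Pi.sub_apply]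
    split_ifs <;> first | rfl | omega
  · rw [if_neg hi, Pi.sub_apply, if_neg (by omega)]
termination_by ∑ j, x j
decreasing_by exact sum_update_pred_lt x hi

lemma pathCount_univ_zero (x : Fin k → ℕ) : pathCount Set.univ 0 x = Nat.multinomial univ x := by
  simp [pathCount_univ]

lemma pathCount_univ_single (i : Fin k) (x : Fin k → ℕ) :
    pathCount Set.univ (Pi.single i 1) x =
      if 0 < x i then Nat.multinomial univ (update x i (x i - 1)) else 0 := by
  have hle : Pi.single i 1 ≤ x ↔ 0 < x i := by
    refine ⟨fun h => by simpa [Nat.one_le_iff_ne_zero, Nat.pos_iff_ne_zero] using h i,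
      fun h j => ?_⟩
    rcases eq_or_ne j i with rfl | hji
    · simpa [Nat.one_le_iff_ne_zero, Nat.pos_iff_ne_zero] using h
    · simp [Pi.single_eq_of_ne hji]
  have hsub : x - Pi.single i 1 = update x i (x i - 1) := by
    ext j
    rcases eq_or_ne j i with rfl | hji
    · simp
    · simp [Pi.single_eq_of_ne hji, update_of_ne hji]
  rw [pathCount_univ, if_congr hle (congrArg _ hsub) rfl]

end PathCount

section HalfSpace

variable {k : ℕ} {i j : Fin k} {t : ℕ} {x : Fin k → ℕ}

/-- `halfSpace 0 2 b` is the region `R` of the paper (coordinates are indexed from `0`). -/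
def halfSpace (i j : Fin k) (t : ℤ) : Set (Fin k → ℕ) := {x | (x i : ℤ) - x j < t}

lemma mem_halfSpace : x ∈ halfSpace i j t ↔ x i < x j + t := by
  show (x i : ℤ) - x j < t ↔ _
  omega

/-- Reflection in the hyperplane `x i - x j = t`; it exchanges the step directions `i` and `j`.
Because of truncated subtraction it is only meaningful when `t ≤ x i`. -/
def reflect (i j : Fin k) (t : ℕ) (x : Fin k → ℕ) : Fin k → ℕ :=
  update (update x i (x j + t)) j (x i - t)

lemma reflect_apply_left (hij : i ≠ j) : reflect i j t x i = x j + t := by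
  rw [reflect, update_of_ne hij, update_self]

lemma reflect_apply_right : reflect i j t x j = x i - t := update_self _ _ _

lemma reflect_eq_self (hx : x i = x j + t) : reflect i j t x = x := by
  ext l
  simp only [reflect, update_apply]
  split_ifs <;> subst_vars <;> omega

lemma reflect_update_pred (hij : i ≠ j) {m : Fin k} (hm : 0 < x m) :
    reflect i j t (update x m (x m - 1)) =
      update (reflect i j t x) (Equiv.swap i j m) (reflect i j t x (Equiv.swap i j m) - 1) := by
  ext l
  simp only [reflect, update_apply, Equiv.swap_apply_def]
  split_ifs <;> subst_vars <;> omega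

lemma reflect_update_pred_of_eq_add (hij : i ≠ j) {y : Fin k → ℕ} (hy : y i = y j + t) :
    reflect i j t (update y i (y i - 1)) = update y j (y j - 1) := by
  ext l
  simp only [reflect, update_apply]
  split_ifs <;> subst_vars <;> omega

lemma sum_reflect_update_pred (hij : i ≠ j) (g : (Fin k → ℕ) → ℕ) {z : Fin k → ℕ}
    (ht : t ≤ z i) (hz : z i < z j + t) :
    ∑ m, (if 0 < z m ∧ t ≤ update z m (z m - 1) i then
        g (reflect i j t (update z m (z m - 1))) else 0) =
      ∑ m, if 0 < reflect i j t z m then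
        g (update (reflect i j t z) m (reflect i j t z m - 1)) else 0 := by
  refine Fintype.sum_equiv (Equiv.swap i j) _ _ fun m => ?_
  have hcond : 0 < z m ∧ t ≤ update z m (z m - 1) i ↔
      0 < reflect i j t z (Equiv.swap i j m) := by
    simp only [reflect, update_apply, Equiv.swap_apply_def]
    split_ifs <;> subst_vars <;> omega
  by_cases hm : 0 < z m
  · rw [reflect_update_pred hij hm]
    exact if_congr hcond rfl rfl
  · rw [if_neg fun h => hm h.1, if_neg (hcond.not.mp fun h => hm h.1)]

/-- Reflection principle: the paths from `a` to `z` that touch the boundary `x i = x j + t` are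
as many as the paths from `a` to `reflect i j t z`. -/
theorem pathCount_halfSpace_add_reflect (hij : i ≠ j) {a : Fin k → ℕ}
    (ha : a ∈ halfSpace i j t) (z : Fin k → ℕ) (hz : z i ≤ z j + t) :
    pathCount (halfSpace i j t) a z +
        (if t ≤ z i then pathCount Set.univ a (reflect i j t z) else 0) =
      pathCount Set.univ a z := by
  rw [mem_halfSpace] at ha
  by_cases hza : z = a
  · subst hza
    rw [pathCount_self, pathCount_self, if_pos (mem_halfSpace.mpr ha), if_pos (Set.mem_univ z),
      add_eq_left, ite_eq_right_iff]
    refine fun ht => pathCount_of_not_le fun h => ?_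
    have : z j ≤ z i - t := reflect_apply_right ▸ h j
    omega
  by_cases hzR : z ∈ halfSpace i j t
  swap
  · rw [mem_halfSpace] at hzR
    rw [pathCount_of_notMem (mem_halfSpace.not.mpr hzR), reflect_eq_self (by omega),
      if_pos (by omega), zero_add]
  rw [mem_halfSpace] at hzR
  have hstep : ∀ m, (if 0 < z m then pathCount (halfSpace i j t) a (update z m (z m - 1)) else 0) +
      (if 0 < z m ∧ t ≤ update z m (z m - 1) i then
        pathCount Set.univ a (reflect i j t (update z m (z m - 1))) else 0) =
      if 0 < z m then pathCount Set.univ a (update z m (z m - 1)) else 0 := by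
    intro m
    by_cases hm : 0 < z m
    · rw [if_pos hm, if_pos hm, if_congr (and_iff_right hm) rfl rfl]
      refine pathCount_halfSpace_add_reflect hij (mem_halfSpace.mpr ha) _ ?_
      simp only [update_apply]
      split_ifs <;> subst_vars <;> omega
    · simp only [hm, false_and, if_false, add_zero]
  have hreflect : (if t ≤ z i then pathCount Set.univ a (reflect i j t z) else 0) =
      ∑ m, if 0 < z m ∧ t ≤ update z m (z m - 1) i then
        pathCount Set.univ a (reflect i j t (update z m (z m - 1))) else 0 := by
    by_cases ht : t ≤ z i
    · have hne : reflect i j t z ≠ a := fun h => by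
        have hi : z j + t = a i := h ▸ (reflect_apply_left hij).symm
        have hj : z i - t = a j := h ▸ reflect_apply_right.symm
        omega
      rw [if_pos ht, pathCount_of_ne_of_mem hne (Set.mem_univ _),
        sum_reflect_update_pred hij _ ht hzR]
    · rw [if_neg ht]
      refine (Finset.sum_eq_zero fun m _ => if_neg fun h => ht ?_).symm
      have := h.2
      rw [update_apply] at this
      split_ifs at this <;> subst_vars <;> omega
  rw [pathCount_of_ne_of_mem hza (mem_halfSpace.mpr hzR),
    pathCount_of_ne_of_mem hza (Set.mem_univ z), hreflect, ← Finset.sum_add_distrib]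
  exact Finset.sum_congr rfl fun m _ => hstep m
termination_by ∑ l, z l
decreasing_by exact sum_update_pred_lt z hm

theorem exitCount_halfSpace_add (hij : i ≠ j) (ht : 0 < t) {a : Fin k → ℕ}
    (ha : a ∈ halfSpace i j t) {y : Fin k → ℕ} (hy : y i = y j + t) :
    exitCount (halfSpace i j t) a y +
        (if 0 < y j then pathCount Set.univ a (update y j (y j - 1)) else 0) =
      pathCount Set.univ a (update y i (y i - 1)) := by
  have hya : y ≠ a := fun h => by rw [mem_halfSpace, ← h] at ha; omega
  have hlast : ∀ m, m ≠ i →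
      (if 0 < y m then pathCount (halfSpace i j t) a (update y m (y m - 1)) else 0) = 0 := by
    refine fun m hmi => ite_eq_right_iff.mpr fun _ => pathCount_of_notMem ?_
    rw [mem_halfSpace, update_of_ne hmi.symm, update_apply]
    split_ifs <;> subst_vars <;> omega
  have hz : update y i (y i - 1) i ≤ update y i (y i - 1) j + t := by
    rw [update_self, update_of_ne hij.symm]; omega
  rw [exitCount_eq_sum hya, Fintype.sum_eq_single i hlast, if_pos (by omega),
    ← pathCount_halfSpace_add_reflect hij ha _ hz, reflect_update_pred_of_eq_add hij hy,
    update_self]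
  exact congrArg _ (if_congr (by omega) rfl rfl)

theorem sum_mul_exitCount_halfSpace_zero {y : Fin k → ℕ} (hij : i ≠ j) (ht : 0 < t)
    (hy : y i = y j + t) :
    (∑ l, y l) * exitCount (halfSpace i j t) 0 y = t * Nat.multinomial univ y := by
  have h0 := exitCount_halfSpace_add hij ht (a := 0) (by simp [mem_halfSpace, ht]) hy
  rw [pathCount_univ_zero, pathCount_univ_zero] at h0
  have hA := Nat.sum_mul_multinomial_update_pred (f := y) (Finset.mem_univ i)
  have hB := Nat.sum_mul_multinomial_update_pred (f := y) (Finset.mem_univ j)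
  rw [if_pos (by omega)] at hA
  zify at h0 hA hB hy ⊢
  linear_combination (∑ l, (y l : ℤ)) * h0 + hA - hB + (Nat.multinomial univ y : ℤ) * hy

theorem sum_mul_exitCount_halfSpace_single {y : Fin k → ℕ} (hij : i ≠ j) (ht : 2 ≤ t)
    (hy : y i = y j + t) :
    (∑ l, y l) * (∑ l, y l - 1) * exitCount (halfSpace i j t) (Pi.single i 1) y =
      y i * (t - 1) * Nat.multinomial univ y := by
  have hyi : 0 < y i := by omega
  have hyi' : 0 < y i - 1 := by omega
  have h1 := exitCount_halfSpace_add hij (by omega) (a := Pi.single i 1)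
    (by simp [mem_halfSpace]; omega) hy
  rw [pathCount_univ_single, pathCount_univ_single, update_self, update_of_ne hij,
    if_pos hyi, if_pos hyi'] at h1
  have hA := Nat.sum_mul_multinomial_update_pred (f := y) (Finset.mem_univ i)
  have hB := Nat.sum_mul_multinomial_update_pred (f := y) (Finset.mem_univ j)
  have hC := Nat.sum_mul_multinomial_update_pred (f := update y i (y i - 1)) (Finset.mem_univ i)
  rw [if_pos hyi] at hA
  rw [update_self, Finset.sum_update_pred (Finset.mem_univ i) hyi, if_pos hyi'] at hC
  have hD : (∑ l, y l - 1) * (if 0 < y j then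
        Nat.multinomial univ (update (update y j (y j - 1)) i (y i - 1)) else 0) =
      y i * (if 0 < y j then Nat.multinomial univ (update y j (y j - 1)) else 0) := by
    split_ifs with hj
    · have := Nat.sum_mul_multinomial_update_pred (f := update y j (y j - 1)) (Finset.mem_univ i)
      rwa [Finset.sum_update_pred (Finset.mem_univ j) hj, update_of_ne hij, if_pos hyi] at this
    · rw [mul_zero, mul_zero]
  have hn : 1 ≤ ∑ l, y l :=
    hyi.trans_le (Finset.single_le_sum (fun l _ => Nat.zero_le (y l)) (Finset.mem_univ i))
  generalize (if 0 < y j then Nat.multinomial univ (update y j (y j - 1)) else 0) = B at hB hD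
  generalize (if 0 < y j then
    Nat.multinomial univ (update (update y j (y j - 1)) i (y i - 1)) else 0) = D at h1 hD
  zify [hn, show 1 ≤ t by omega, hyi] at h1 hA hB hC hD hy ⊢
  linear_combination (∑ l, (y l : ℤ)) * ((∑ l, (y l : ℤ)) - 1) * h1
    - (∑ l, (y l : ℤ)) * hD + (∑ l, (y l : ℤ)) * hC - (y i : ℤ) * hB + ((y i : ℤ) - 1) * hA
    + (y i : ℤ) * (Nat.multinomial univ y : ℤ) * hy

end HalfSpace

/-- For `b > 0` and a boundary point `y ∈ ℕ⁴` with
`y₁ - y₃ = b` and `n = y₁ + y₂ + y₃ + y₄`, with `k(y)` the number of paths from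
the origin staying in `R = {x : x₁ - x₃ < b}` except at `y`, and `k₁*(y)` the
number of such paths from `e₁`, one has
`b·(n-1)·k₁*(y) = (b-1)·y₁·k(y)`, i.e. `k₁*(y)/k(y) = ((b-1)/b)·y₁/(n-1)`. -/
theorem estimator_count_identity_e1 (b : ℤ) (hb : 0 < b) (y : Fin 4 → ℕ)
    (hy : (y 0 : ℤ) - (y 2 : ℤ) = b) (n : ℕ) (hn : n = y 0 + y 1 + y 2 + y 3) :
    b * ((n : ℤ) - 1) *
        (exitCount {x : Fin 4 → ℕ | (x 0 : ℤ) - (x 2 : ℤ) < b}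
          (Pi.single 0 1) y : ℤ)
      = (b - 1) * (y 0 : ℤ) *
        (exitCount {x : Fin 4 → ℕ | (x 0 : ℤ) - (x 2 : ℤ) < b} 0 y : ℤ) := by
  obtain ⟨t, rfl⟩ : ∃ t : ℕ, b = t := ⟨b.toNat, (Int.toNat_of_nonneg hb.le).symm⟩
  change (t : ℤ) * _ * (exitCount (halfSpace 0 2 t) _ y : ℤ) =
    _ * _ * (exitCount (halfSpace 0 2 t) 0 y : ℤ)
  have hy0 : y 0 = y 2 + t := by omega
  have hn1 : 1 ≤ n := by omega
  rw [← Fin.sum_univ_four] at hn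
  rcases (show t = 1 ∨ 2 ≤ t by omega) with ht | ht
  · by_cases hy1 : y = Pi.single 0 1
    · simp [hn, hy1, ht]
    · have hstart : Pi.single 0 1 ∉ insert y (halfSpace 0 2 t) := by
        rw [Set.mem_insert_iff, mem_halfSpace, not_or]
        exact ⟨Ne.symm hy1, by simp [ht]⟩
      rw [exitCount, pathCount_of_start_notMem hstart, ht]
      simp
  have h0 := sum_mul_exitCount_halfSpace_zero (i := 0) (j := 2) (by decide) (by omega) hy0
  have h1 := sum_mul_exitCount_halfSpace_single (i := 0) (j := 2) (by decide) ht hy0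
  rw [← hn] at h0 h1
  zify [hn1, show 1 ≤ t by omega] at h0 h1
  refine mul_left_cancel₀ (show (n : ℤ) ≠ 0 by omega) ?_
  linear_combination (t : ℤ) * h1 - ((t : ℤ) - 1) * (y 0 : ℤ) * h0
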